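/- The label substitution rule (s), inferring R(u/v), Γ(u/v) ⊢ (w:A)(u/v) from R, Γ ⊢ w : A (uniformly replacing label v by label u everywhere), and the weakening rule (w_l), inferring R', R, Γ, Γ' ⊢ w : A from R, Γ ⊢ w : A (for arbitrary multisets R' of relational atoms and Γ' of labeled formulae), are both hp-admissible in L_Σ(𝒜). -/
import Mathlib


namespace IGL

/-- An alphabet Σ: a nonempty countable type of characters partitioned into a
forward part and a backward part by an involutive converse operation. -/
structure Alphabet where
  Char : Type
  nonempty : Nonempty Char
  countable : Countable Char
  fwd : Char → Prop
  conv : Char → Char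
  conv_conv : ∀ x, conv (conv x) = x
  fwd_iff : ∀ x, fwd x ↔ ¬ fwd (conv x)

/-- Formulae of the intuitionistic multi-modal language `L_Σ`. -/
inductive Formula (C : Type) : Type
  | atom : ℕ → Formula C
  | bot  : Formula C
  | or   : Formula C → Formula C → Formula C
  | and  : Formula C → Formula C → Formula C
  | imp  : Formula C → Formula C → Formula C
  | dia  : C → Formula C → Formula C
  | box  : C → Formula C → Formula C

namespace Formula
/-- Intuitionistic negation `¬A := A ⊃ ⊥`. -/
def neg {C : Type} (A : Formula C) : Formula C := A.imp Formula.bot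
/-- `A ≡ B := (A ⊃ B) ∧ (B ⊃ A)`. -/
def equiv {C : Type} (A B : Formula C) : Formula C := (A.imp B).and (B.imp A)
end Formula

/-- Bi-relational Σ-models. -/
structure BiModel (α : Alphabet) where
  W : Type
  nonempty : Nonempty W
  le : W → W → Prop
  le_refl : ∀ w, le w w
  le_trans : ∀ w u v, le w u → le u v → le w v
  R : α.Char → W → W → Prop
  F1 : ∀ x w v v', R x w v → le v v' → ∃ w', le w w' ∧ R x w' v'
  F2 : ∀ x w w' v, le w w' → R x w v → ∃ v', R x w' v' ∧ le v v'
  F3 : ∀ x w u, R x w u ↔ R (α.conv x) u w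
  V : W → ℕ → Prop
  mono : ∀ w u, le w u → ∀ p, V w p → V u p

/-- Satisfaction `M,w ⊩ A`. -/
def Sat {α : Alphabet} (M : BiModel α) : M.W → Formula α.Char → Prop
  | w, Formula.atom p => M.V w p
  | _, Formula.bot => False
  | w, Formula.or A B => Sat M w A ∨ Sat M w B
  | w, Formula.and A B => Sat M w A ∧ Sat M w B
  | w, Formula.imp A B => ∀ w', M.le w w' → Sat M w' A → Sat M w' B
  | w, Formula.dia x A => ∃ v, M.R x w v ∧ Sat M v A
  | w, Formula.box x A => ∀ w' v', M.le w w' → M.R x w' v' → Sat M v' A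

/-- Axioms: seriality axioms `D_x` or intuitionistic path axioms
`(⟨x₁⟩⋯⟨xₙ⟩A ⊃ ⟨x⟩A) ∧ ([x]A ⊃ [x₁]⋯[xₙ]A)`, encoded by the character `x`
and the string `[x₁,…,xₙ]`. -/
inductive Ax (C : Type) : Type
  | ser : C → Ax C
  | ipa : C → List C → Ax C

/-- Composition of the accessibility relations along a string. -/
def BiModel.Rs {α : Alphabet} (M : BiModel α) : List α.Char → M.W → M.W → Prop
  | [], w, u => w = u
  | x :: s, w, u => ∃ v, M.R x w v ∧ M.Rs s v u

/-- The frame condition corresponding to an axiom. -/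
def SatisfiesAx {α : Alphabet} (M : BiModel α) : Ax α.Char → Prop
  | Ax.ser x => ∀ w, ∃ u, M.R x w u
  | Ax.ipa x s => ∀ w u, M.Rs s w u → M.R x w u

/-- A bi-relational (Σ,𝒜)-model. -/
def AModel {α : Alphabet} (𝒜 : Set (Ax α.Char)) (M : BiModel α) : Prop :=
  ∀ a ∈ 𝒜, SatisfiesAx M a

/-- `⟨x₁⟩⋯⟨xₙ⟩A`. -/
def dias {C : Type} : List C → Formula C → Formula C
  | [], A => A
  | x :: s, A => Formula.dia x (dias s A)

/-- `[x₁]⋯[xₙ]A`. -/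
def boxes {C : Type} : List C → Formula C → Formula C
  | [], A => A
  | x :: s, A => Formula.box x (boxes s A)

/-- The Hilbert system `H IK_m(Σ,𝒜)`. -/
inductive Hprf (α : Alphabet) (𝒜 : Set (Ax α.Char)) : Formula α.Char → Prop
  | ipl1 (A B : Formula α.Char) : Hprf α 𝒜 (A.imp (B.imp A))
  | ipl2 (A B C : Formula α.Char) : Hprf α 𝒜 ((A.imp (B.imp C)).imp ((A.imp B).imp (A.imp C)))
  | ipl3 (A B : Formula α.Char) : Hprf α 𝒜 (A.imp (A.or B))
  | ipl4 (A B : Formula α.Char) : Hprf α 𝒜 (B.imp (A.or B))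
  | ipl5 (A B C : Formula α.Char) : Hprf α 𝒜 ((A.imp C).imp ((B.imp C).imp ((A.or B).imp C)))
  | ipl6 (A B : Formula α.Char) : Hprf α 𝒜 ((A.and B).imp A)
  | ipl7 (A B : Formula α.Char) : Hprf α 𝒜 ((A.and B).imp B)
  | ipl8 (A B : Formula α.Char) : Hprf α 𝒜 (A.imp (B.imp (A.and B)))
  | ipl9 (A : Formula α.Char) : Hprf α 𝒜 (Formula.bot.imp A)
  | axK (x : α.Char) (A B : Formula α.Char) : Hprf α 𝒜 ((Formula.box x (A.imp B)).imp ((Formula.box x A).imp (Formula.box x B)))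
  | axBoxAnd (x : α.Char) (A B : Formula α.Char) : Hprf α 𝒜 ((Formula.box x (A.and B)).equiv ((Formula.box x A).and (Formula.box x B)))
  | axDiaOr (x : α.Char) (A B : Formula α.Char) : Hprf α 𝒜 ((Formula.dia x (A.or B)).equiv ((Formula.dia x A).or (Formula.dia x B)))
  | axKdia (x : α.Char) (A B : Formula α.Char) : Hprf α 𝒜 ((Formula.box x (A.imp B)).imp ((Formula.dia x A).imp (Formula.dia x B)))
  | axBoxDia (x : α.Char) (A B : Formula α.Char) : Hprf α 𝒜 (((Formula.box x A).and (Formula.dia x B)).imp (Formula.dia x (A.and B)))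
  | axNotDiaBot (x : α.Char) : Hprf α 𝒜 (Formula.dia x Formula.bot).neg
  | axConv (x : α.Char) (A : Formula α.Char) : Hprf α 𝒜 ((A.imp (Formula.box x (Formula.dia (α.conv x) A))).and
      ((Formula.dia x (Formula.box (α.conv x) A)).imp A))
  | axFS (x : α.Char) (A B : Formula α.Char) : Hprf α 𝒜 (((Formula.dia x A).imp (Formula.box x B)).imp (Formula.box x (A.imp B)))
  | axDiaImp (x : α.Char) (A B : Formula α.Char) : Hprf α 𝒜 ((Formula.dia x (A.imp B)).imp ((Formula.box x A).imp (Formula.dia x B)))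
  | axSer (x : α.Char) (A : Formula α.Char) (h : Ax.ser x ∈ 𝒜) : Hprf α 𝒜 ((Formula.box x A).imp (Formula.dia x A))
  | axIpa (x : α.Char) (s : List α.Char) (A : Formula α.Char) (h : Ax.ipa x s ∈ 𝒜) :
      Hprf α 𝒜 (((dias s A).imp (Formula.dia x A)).and ((Formula.box x A).imp (boxes s A)))
  | mp (A B : Formula α.Char) : Hprf α 𝒜 (A.imp B) → Hprf α 𝒜 A → Hprf α 𝒜 B
  | nec (x : α.Char) (A : Formula α.Char) : Hprf α 𝒜 A → Hprf α 𝒜 (Formula.box x A)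

/-- `B₁ ∧ ⋯ ∧ Bₙ` (left-nested). -/
def conjList {C : Type} : Formula C → List (Formula C) → Formula C
  | A, [] => A
  | A, B :: L => conjList (A.and B) L

/-- `𝒮 ⊢_𝒜 A`: either `A ∈ IK_m(Σ,𝒜)` or `B₁∧⋯∧Bₙ ⊃ A ∈ IK_m(Σ,𝒜)` for some
`B₁,…,Bₙ ∈ 𝒮`. -/
def HderivFrom (α : Alphabet) (𝒜 : Set (Ax α.Char)) (S : Set (Formula α.Char))
    (A : Formula α.Char) : Prop :=
  Hprf α 𝒜 A ∨ ∃ B L, B ∈ S ∧ (∀ D ∈ L, D ∈ S) ∧ Hprf α 𝒜 ((conjList B L).imp A)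

/-! ### Labeled sequents -/

/-- A relational atom `w R_x u`. -/
abbrev Rel (C : Type) := ℕ × C × ℕ
/-- A labeled formula `w : A`. -/
abbrev LF (C : Type) := ℕ × Formula C

def relLabels {C : Type} (R : Multiset (Rel C)) : Set ℕ :=
  {l | ∃ a ∈ R, a.1 = l ∨ a.2.2 = l}

def lfLabels {C : Type} (Γ : Multiset (LF C)) : Set ℕ :=
  {l | ∃ b ∈ Γ, b.1 = l}

/-- `u` is fresh with respect to the sequent `R, Γ ⊢ v : ⋯`. -/
def freshIn {C : Type} (u : ℕ) (R : Multiset (Rel C)) (Γ : Multiset (LF C)) (v : ℕ) : Prop :=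
  u ∉ relLabels R ∧ u ∉ lfLabels Γ ∧ u ≠ v

/-- `Chain s w u m`: the multiset `m` is a chain of relational atoms `w R_s u`
along the string `s` (with `w = u` and `m = 0` when `s = ε`). -/
inductive Chain {C : Type} : List C → ℕ → ℕ → Multiset (Rel C) → Prop
  | nil (w : ℕ) : Chain [] w w 0
  | cons {x : C} {s : List C} {w v u : ℕ} {m : Multiset (Rel C)} :
      Chain s v u m → Chain (x :: s) w u ((w, x, v) ::ₘ m)

/-- The labeled calculus `L_Σ(𝒜)`, height-indexed: `LD α 𝒜 n R Γ w A` states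
that the labeled sequent `R, Γ ⊢ w : A` has a proof of height at most `n`. -/
inductive LD (α : Alphabet) (𝒜 : Set (Ax α.Char)) :
    ℕ → Multiset (Rel α.Char) → Multiset (LF α.Char) → ℕ → Formula α.Char → Prop
  | id (n : ℕ) (R : Multiset (Rel α.Char)) (Γ : Multiset (LF α.Char)) (w p : ℕ) : LD α 𝒜 n R ((w, Formula.atom p) ::ₘ Γ) w (Formula.atom p)
  | botL (n : ℕ) (R : Multiset (Rel α.Char)) (Γ : Multiset (LF α.Char)) (w u : ℕ) (A : Formula α.Char) : LD α 𝒜 n R ((w, Formula.bot) ::ₘ Γ) u A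
  | orL {n : ℕ} {R : Multiset (Rel α.Char)} {Γ : Multiset (LF α.Char)} {w u : ℕ} {A B C : Formula α.Char} :
      LD α 𝒜 n R ((w, A) ::ₘ Γ) u C → LD α 𝒜 n R ((w, B) ::ₘ Γ) u C →
      LD α 𝒜 (n + 1) R ((w, A.or B) ::ₘ Γ) u C
  | orR1 {n : ℕ} {R : Multiset (Rel α.Char)} {Γ : Multiset (LF α.Char)} {w : ℕ} {A B : Formula α.Char} : LD α 𝒜 n R Γ w A → LD α 𝒜 (n + 1) R Γ w (A.or B)
  | orR2 {n : ℕ} {R : Multiset (Rel α.Char)} {Γ : Multiset (LF α.Char)} {w : ℕ} {A B : Formula α.Char} : LD α 𝒜 n R Γ w B → LD α 𝒜 (n + 1) R Γ w (A.or B)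
  | andL {n : ℕ} {R : Multiset (Rel α.Char)} {Γ : Multiset (LF α.Char)} {w u : ℕ} {A B C : Formula α.Char} :
      LD α 𝒜 n R ((w, A) ::ₘ (w, B) ::ₘ Γ) u C →
      LD α 𝒜 (n + 1) R ((w, A.and B) ::ₘ Γ) u C
  | andR {n : ℕ} {R : Multiset (Rel α.Char)} {Γ : Multiset (LF α.Char)} {w : ℕ} {A B : Formula α.Char} :
      LD α 𝒜 n R Γ w A → LD α 𝒜 n R Γ w B → LD α 𝒜 (n + 1) R Γ w (A.and B)
  | impL {n : ℕ} {R : Multiset (Rel α.Char)} {Γ : Multiset (LF α.Char)} {w u : ℕ} {A B C : Formula α.Char} :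
      LD α 𝒜 n R ((w, A.imp B) ::ₘ Γ) w A → LD α 𝒜 n R ((w, B) ::ₘ Γ) u C →
      LD α 𝒜 (n + 1) R ((w, A.imp B) ::ₘ Γ) u C
  | impR {n : ℕ} {R : Multiset (Rel α.Char)} {Γ : Multiset (LF α.Char)} {w : ℕ} {A B : Formula α.Char} :
      LD α 𝒜 n R ((w, A) ::ₘ Γ) w B → LD α 𝒜 (n + 1) R Γ w (A.imp B)
  | diaL {n : ℕ} {R : Multiset (Rel α.Char)} {Γ : Multiset (LF α.Char)} {w u v : ℕ} {x : α.Char} {A B : Formula α.Char} (hf : freshIn u R ((w, Formula.dia x A) ::ₘ Γ) v) :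
      LD α 𝒜 n ((w, x, u) ::ₘ R) ((u, A) ::ₘ Γ) v B →
      LD α 𝒜 (n + 1) R ((w, Formula.dia x A) ::ₘ Γ) v B
  | diaR {n : ℕ} {R : Multiset (Rel α.Char)} {Γ : Multiset (LF α.Char)} {w u : ℕ} {x : α.Char} {A : Formula α.Char} :
      LD α 𝒜 n ((w, x, u) ::ₘ R) Γ u A →
      LD α 𝒜 (n + 1) ((w, x, u) ::ₘ R) Γ w (Formula.dia x A)
  | boxR {n : ℕ} {R : Multiset (Rel α.Char)} {Γ : Multiset (LF α.Char)} {w u : ℕ} {x : α.Char} {A : Formula α.Char} (hf : freshIn u R Γ w) :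
      LD α 𝒜 n ((w, x, u) ::ₘ R) Γ u A → LD α 𝒜 (n + 1) R Γ w (Formula.box x A)
  | boxL {n : ℕ} {R : Multiset (Rel α.Char)} {Γ : Multiset (LF α.Char)} {w u v : ℕ} {x : α.Char} {A C : Formula α.Char} :
      LD α 𝒜 n ((w, x, u) ::ₘ R) ((w, Formula.box x A) ::ₘ (u, A) ::ₘ Γ) v C →
      LD α 𝒜 (n + 1) ((w, x, u) ::ₘ R) ((w, Formula.box x A) ::ₘ Γ) v C
  | dx {n : ℕ} {R : Multiset (Rel α.Char)} {Γ : Multiset (LF α.Char)} {u v : ℕ} {x : α.Char} {A : Formula α.Char} (w : ℕ) (hax : Ax.ser x ∈ 𝒜) (hf : freshIn u R Γ v) :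
      LD α 𝒜 n ((w, x, u) ::ₘ R) Γ v A → LD α 𝒜 (n + 1) R Γ v A
  | isx {n : ℕ} {R : Multiset (Rel α.Char)} {Γ : Multiset (LF α.Char)} {w u v : ℕ} {s : List α.Char} {x : α.Char} {m : Multiset (Rel α.Char)} {A : Formula α.Char} (hax : Ax.ipa x s ∈ 𝒜) (hc : Chain s w u m) :
      LD α 𝒜 n ((w, x, u) ::ₘ (m + R)) Γ v A → LD α 𝒜 (n + 1) (m + R) Γ v A
  | cx {n : ℕ} {R : Multiset (Rel α.Char)} {Γ : Multiset (LF α.Char)} {w u v : ℕ} {x : α.Char} {A : Formula α.Char} :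
      LD α 𝒜 n ((w, x, u) ::ₘ (u, α.conv x, w) ::ₘ R) Γ v A →
      LD α 𝒜 (n + 1) ((w, x, u) ::ₘ R) Γ v A

/-- Derivability in `L_Σ(𝒜)`. -/
def LDeriv (α : Alphabet) (𝒜 : Set (Ax α.Char)) (R : Multiset (Rel α.Char))
    (Γ : Multiset (LF α.Char)) (w : ℕ) (A : Formula α.Char) : Prop :=
  ∃ n, LD α 𝒜 n R Γ w A

/-- (Σ,𝒜)-validity of a labeled sequent. -/
def SeqValid (α : Alphabet) (𝒜 : Set (Ax α.Char)) (R : Multiset (Rel α.Char))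
    (Γ : Multiset (LF α.Char)) (w : ℕ) (A : Formula α.Char) : Prop :=
  ∀ (M : BiModel α), AModel 𝒜 M → ∀ I : ℕ → M.W,
    (∀ a ∈ R, M.R a.2.1 (I a.1) (I a.2.2)) → (∀ b ∈ Γ, Sat M (I b.1) b.2) →
      Sat M (I w) A

/-! ### Grammars and propagation -/

/-- Converse of a string: `s̄ = x̄ₙ⋯x̄₁` for `s = x₁⋯xₙ`. -/
def convStr {C : Type} (cv : C → C) (s : List C) : List C := (s.map cv).reverse

/-- The 𝒜-grammar `g(𝒜)`. -/
def Gram (α : Alphabet) (𝒜 : Set (Ax α.Char)) : Set (α.Char × List α.Char) :=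
  {p | Ax.ipa p.1 p.2 ∈ 𝒜 ∨
        ∃ x s, Ax.ipa x s ∈ 𝒜 ∧ p.1 = α.conv x ∧ p.2 = convStr α.conv s}

/-- One-step derivation between strings in a grammar. -/
def Step {C : Type} (g : Set (C × List C)) (s t : List C) : Prop :=
  ∃ s₁ s₂ x r, (x, r) ∈ g ∧ s = s₁ ++ x :: s₂ ∧ t = s₁ ++ r ++ s₂

/-- The language of the character `x` relative to a grammar. -/
def Lang {C : Type} (g : Set (C × List C)) (x : C) : Set (List C) :=
  {t | Relation.ReflTransGen (Step g) [x] t}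

/-- An edge of the propagation graph `PG(R)`. -/
def PGEdge (α : Alphabet) (R : Multiset (Rel α.Char)) (a : ℕ) (x : α.Char) (b : ℕ) : Prop :=
  (a, x, b) ∈ R ∨ (b, α.conv x, a) ∈ R

/-- `PPath α R w u s`: there is a propagation path from `w` to `u` in `PG(R)`
whose string is `s`. -/
inductive PPath (α : Alphabet) (R : Multiset (Rel α.Char)) : ℕ → ℕ → List α.Char → Prop
  | nil (w : ℕ) : PPath α R w w []
  | cons {w v u : ℕ} {x : α.Char} {s : List α.Char} :
      PGEdge α R w x v → PPath α R v u s → PPath α R w u (x :: s)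

/-- Side condition of the propagation rules: there exists a propagation path
`π(w,u)` in `PG(R)` with `s_π(w,u) ∈ L_{g(𝒜)}(x)`. -/
def CanProp (α : Alphabet) (𝒜 : Set (Ax α.Char)) (R : Multiset (Rel α.Char))
    (w u : ℕ) (x : α.Char) : Prop :=
  ∃ s, PPath α R w u s ∧ s ∈ Lang (Gram α 𝒜) x

/-- The refined labeled calculus `L*_Σ(𝒜)`, height-indexed. -/
inductive LDs (α : Alphabet) (𝒜 : Set (Ax α.Char)) :
    ℕ → Multiset (Rel α.Char) → Multiset (LF α.Char) → ℕ → Formula α.Char → Prop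
  | id (n : ℕ) (R : Multiset (Rel α.Char)) (Γ : Multiset (LF α.Char)) (w p : ℕ) : LDs α 𝒜 n R ((w, Formula.atom p) ::ₘ Γ) w (Formula.atom p)
  | botL (n : ℕ) (R : Multiset (Rel α.Char)) (Γ : Multiset (LF α.Char)) (w u : ℕ) (A : Formula α.Char) : LDs α 𝒜 n R ((w, Formula.bot) ::ₘ Γ) u A
  | orL {n : ℕ} {R : Multiset (Rel α.Char)} {Γ : Multiset (LF α.Char)} {w u : ℕ} {A B C : Formula α.Char} :
      LDs α 𝒜 n R ((w, A) ::ₘ Γ) u C → LDs α 𝒜 n R ((w, B) ::ₘ Γ) u C →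
      LDs α 𝒜 (n + 1) R ((w, A.or B) ::ₘ Γ) u C
  | orR1 {n : ℕ} {R : Multiset (Rel α.Char)} {Γ : Multiset (LF α.Char)} {w : ℕ} {A B : Formula α.Char} : LDs α 𝒜 n R Γ w A → LDs α 𝒜 (n + 1) R Γ w (A.or B)
  | orR2 {n : ℕ} {R : Multiset (Rel α.Char)} {Γ : Multiset (LF α.Char)} {w : ℕ} {A B : Formula α.Char} : LDs α 𝒜 n R Γ w B → LDs α 𝒜 (n + 1) R Γ w (A.or B)
  | andL {n : ℕ} {R : Multiset (Rel α.Char)} {Γ : Multiset (LF α.Char)} {w u : ℕ} {A B C : Formula α.Char} :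
      LDs α 𝒜 n R ((w, A) ::ₘ (w, B) ::ₘ Γ) u C →
      LDs α 𝒜 (n + 1) R ((w, A.and B) ::ₘ Γ) u C
  | andR {n : ℕ} {R : Multiset (Rel α.Char)} {Γ : Multiset (LF α.Char)} {w : ℕ} {A B : Formula α.Char} :
      LDs α 𝒜 n R Γ w A → LDs α 𝒜 n R Γ w B → LDs α 𝒜 (n + 1) R Γ w (A.and B)
  | impL {n : ℕ} {R : Multiset (Rel α.Char)} {Γ : Multiset (LF α.Char)} {w u : ℕ} {A B C : Formula α.Char} :
      LDs α 𝒜 n R ((w, A.imp B) ::ₘ Γ) w A → LDs α 𝒜 n R ((w, B) ::ₘ Γ) u C →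
      LDs α 𝒜 (n + 1) R ((w, A.imp B) ::ₘ Γ) u C
  | impR {n : ℕ} {R : Multiset (Rel α.Char)} {Γ : Multiset (LF α.Char)} {w : ℕ} {A B : Formula α.Char} :
      LDs α 𝒜 n R ((w, A) ::ₘ Γ) w B → LDs α 𝒜 (n + 1) R Γ w (A.imp B)
  | diaL {n : ℕ} {R : Multiset (Rel α.Char)} {Γ : Multiset (LF α.Char)} {w u v : ℕ} {x : α.Char} {A B : Formula α.Char} (hf : freshIn u R ((w, Formula.dia x A) ::ₘ Γ) v) :
      LDs α 𝒜 n ((w, x, u) ::ₘ R) ((u, A) ::ₘ Γ) v B →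
      LDs α 𝒜 (n + 1) R ((w, Formula.dia x A) ::ₘ Γ) v B
  | boxR {n : ℕ} {R : Multiset (Rel α.Char)} {Γ : Multiset (LF α.Char)} {w u : ℕ} {x : α.Char} {A : Formula α.Char} (hf : freshIn u R Γ w) :
      LDs α 𝒜 n ((w, x, u) ::ₘ R) Γ u A → LDs α 𝒜 (n + 1) R Γ w (Formula.box x A)
  | dx {n : ℕ} {R : Multiset (Rel α.Char)} {Γ : Multiset (LF α.Char)} {u v : ℕ} {x : α.Char} {A : Formula α.Char} (w : ℕ) (hax : Ax.ser x ∈ 𝒜) (hf : freshIn u R Γ v) :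
      LDs α 𝒜 n ((w, x, u) ::ₘ R) Γ v A → LDs α 𝒜 (n + 1) R Γ v A
  | pdia {n : ℕ} {R : Multiset (Rel α.Char)} {Γ : Multiset (LF α.Char)} {u : ℕ} {x : α.Char} {A : Formula α.Char} (w : ℕ) (h : CanProp α 𝒜 R w u x) :
      LDs α 𝒜 n R Γ u A → LDs α 𝒜 (n + 1) R Γ w (Formula.dia x A)
  | pbox {n : ℕ} {R : Multiset (Rel α.Char)} {Γ : Multiset (LF α.Char)} {w u v : ℕ} {x : α.Char} {A B : Formula α.Char} (h : CanProp α 𝒜 R w u x) :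
      LDs α 𝒜 n R ((w, Formula.box x A) ::ₘ (u, A) ::ₘ Γ) v B →
      LDs α 𝒜 (n + 1) R ((w, Formula.box x A) ::ₘ Γ) v B

/-- Derivability in `L*_Σ(𝒜)`. -/
def LDerivS (α : Alphabet) (𝒜 : Set (Ax α.Char)) (R : Multiset (Rel α.Char))
    (Γ : Multiset (LF α.Char)) (w : ℕ) (A : Formula α.Char) : Prop :=
  ∃ n, LDs α 𝒜 n R Γ w A

/-! ### Label substitutions -/

/-- `subL v u l`: replace the label `v` by `u`. -/
def subL (v u l : ℕ) : ℕ := if l = v then u else l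

def subR {C : Type} (v u : ℕ) (R : Multiset (Rel C)) : Multiset (Rel C) :=
  R.map (fun a => (subL v u a.1, a.2.1, subL v u a.2.2))

def subG {C : Type} (v u : ℕ) (Γ : Multiset (LF C)) : Multiset (LF C) :=
  Γ.map (fun b => (subL v u b.1, b.2))

/-! ### Double-negation translations -/

/-- The double-negation translation on `L_Σ`. -/
def dnt {C : Type} : Formula C → Formula C
  | Formula.atom p => ((Formula.atom p).neg).neg
  | Formula.bot => ((Formula.bot : Formula C).neg).neg
  | Formula.or A B => (((dnt A).neg).and ((dnt B).neg)).neg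
  | Formula.and A B => (dnt A).and (dnt B)
  | Formula.imp A B => (dnt A).imp (dnt B)
  | Formula.dia x A => (Formula.box x ((dnt A).neg)).neg
  | Formula.box x A => Formula.box x (dnt A)

/-! ### The classical language and calculi -/

/-- Formulae of the classical language `L^C_Σ` (negation normal form). -/
inductive CForm (C : Type) : Type
  | pos : ℕ → CForm C
  | neg : ℕ → CForm C
  | or  : CForm C → CForm C → CForm C
  | and : CForm C → CForm C → CForm C
  | dia : C → CForm C → CForm C
  | box : C → CForm C → CForm C

/-- Classical negation, recursively extended to all formulae of `L^C_Σ`. -/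
def cneg {C : Type} : CForm C → CForm C
  | CForm.pos p => CForm.neg p
  | CForm.neg p => CForm.pos p
  | CForm.or A B => CForm.and (cneg A) (cneg B)
  | CForm.and A B => CForm.or (cneg A) (cneg B)
  | CForm.dia x A => CForm.box x (cneg A)
  | CForm.box x A => CForm.dia x (cneg A)

/-- `⊥ := p ∧ ¬p` for a fixed propositional atom. -/
def cbot {C : Type} : CForm C := CForm.and (CForm.pos 0) (CForm.neg 0)

/-- `A ⊃ B := ¬A ∨ B`. -/
def cimp {C : Type} (A B : CForm C) : CForm C := CForm.or (cneg A) B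

/-- Reading a formula of `L_Σ` as a formula of `L^C_Σ`. -/
def toC {C : Type} : Formula C → CForm C
  | Formula.atom p => CForm.pos p
  | Formula.bot => cbot
  | Formula.or A B => CForm.or (toC A) (toC B)
  | Formula.and A B => CForm.and (toC A) (toC B)
  | Formula.imp A B => cimp (toC A) (toC B)
  | Formula.dia x A => CForm.dia x (toC A)
  | Formula.box x A => CForm.box x (toC A)

/-- A classical labeled formula. -/
abbrev CLF (C : Type) := ℕ × CForm C

def clfLabels {C : Type} (Γ : Multiset (CLF C)) : Set ℕ :=
  {l | ∃ b ∈ Γ, b.1 = l}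

/-- The refined labeled calculus `L^C_Σ(𝒜)` for the corresponding classical
grammar logic, operating on one-sided sequents `R ⊢ Γ`. -/
inductive CLD (α : Alphabet) (𝒜 : Set (Ax α.Char)) :
    Multiset (Rel α.Char) → Multiset (CLF α.Char) → Prop
  | id (R : Multiset (Rel α.Char)) (Γ : Multiset (CLF α.Char)) (w p : ℕ) :
      CLD α 𝒜 R ((w, CForm.pos p) ::ₘ (w, CForm.neg p) ::ₘ Γ)
  | orR {R : Multiset (Rel α.Char)} {Γ : Multiset (CLF α.Char)} {w : ℕ}
      {A B : CForm α.Char} :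
      CLD α 𝒜 R ((w, A) ::ₘ (w, B) ::ₘ Γ) → CLD α 𝒜 R ((w, CForm.or A B) ::ₘ Γ)
  | andR {R : Multiset (Rel α.Char)} {Γ : Multiset (CLF α.Char)} {w : ℕ}
      {A B : CForm α.Char} :
      CLD α 𝒜 R ((w, A) ::ₘ Γ) → CLD α 𝒜 R ((w, B) ::ₘ Γ) →
      CLD α 𝒜 R ((w, CForm.and A B) ::ₘ Γ)
  | boxR {R : Multiset (Rel α.Char)} {Γ : Multiset (CLF α.Char)} {w u : ℕ}
      {x : α.Char} {A : CForm α.Char}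
      (hf : u ∉ relLabels R ∧ u ∉ clfLabels ((w, CForm.box x A) ::ₘ Γ)) :
      CLD α 𝒜 ((w, x, u) ::ₘ R) ((u, A) ::ₘ Γ) →
      CLD α 𝒜 R ((w, CForm.box x A) ::ₘ Γ)
  | dx {R : Multiset (Rel α.Char)} {Γ : Multiset (CLF α.Char)} {u : ℕ}
      {x : α.Char} (w : ℕ) (hax : Ax.ser x ∈ 𝒜)
      (hf : u ∉ relLabels R ∧ u ∉ clfLabels Γ) :
      CLD α 𝒜 ((w, x, u) ::ₘ R) Γ → CLD α 𝒜 R Γ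
  | diaR {R : Multiset (Rel α.Char)} {Γ : Multiset (CLF α.Char)} {w u : ℕ}
      {x : α.Char} {A : CForm α.Char} (h : CanProp α 𝒜 R w u x) :
      CLD α 𝒜 R ((w, CForm.dia x A) ::ₘ (u, A) ::ₘ Γ) →
      CLD α 𝒜 R ((w, CForm.dia x A) ::ₘ Γ)

/-- `⟨x₁⟩⋯⟨xₙ⟩A` in the classical language. -/
def cdias {C : Type} : List C → CForm C → CForm C
  | [], A => A
  | x :: s, A => CForm.dia x (cdias s A)

/-- The Hilbert system for the classical grammar logic `K_m(Σ,𝒜')` corresponding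
to `IK_m(Σ,𝒜)`: seriality axioms of `𝒜` are kept and each intuitionistic path
axiom contributes the path axiom `⟨x₁⟩⋯⟨xₙ⟩A ⊃ ⟨x⟩A`. -/
inductive Kprf (α : Alphabet) (𝒜 : Set (Ax α.Char)) : CForm α.Char → Prop
  | cpl1 (A B : CForm α.Char) : Kprf α 𝒜 (cimp A (cimp B A))
  | cpl2 (A B C : CForm α.Char) :
      Kprf α 𝒜 (cimp (cimp A (cimp B C)) (cimp (cimp A B) (cimp A C)))
  | cpl3 (A B : CForm α.Char) : Kprf α 𝒜 (cimp A (CForm.or A B))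
  | cpl4 (A B : CForm α.Char) : Kprf α 𝒜 (cimp B (CForm.or A B))
  | cpl5 (A B C : CForm α.Char) :
      Kprf α 𝒜 (cimp (cimp A C) (cimp (cimp B C) (cimp (CForm.or A B) C)))
  | cpl6 (A B : CForm α.Char) : Kprf α 𝒜 (cimp (CForm.and A B) A)
  | cpl7 (A B : CForm α.Char) : Kprf α 𝒜 (cimp (CForm.and A B) B)
  | cpl8 (A B : CForm α.Char) : Kprf α 𝒜 (cimp A (cimp B (CForm.and A B)))
  | cpl9 (A : CForm α.Char) : Kprf α 𝒜 (cimp cbot A)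
  | cpl10 (A : CForm α.Char) : Kprf α 𝒜 (CForm.or A (cneg A))
  | axK (x : α.Char) (A B : CForm α.Char) :
      Kprf α 𝒜 (cimp (CForm.box x (cimp A B)) (cimp (CForm.box x A) (CForm.box x B)))
  | axConv (x : α.Char) (A : CForm α.Char) :
      Kprf α 𝒜 (cimp A (CForm.box x (CForm.dia (α.conv x) A)))
  | axSer (x : α.Char) (A : CForm α.Char) (h : Ax.ser x ∈ 𝒜) :
      Kprf α 𝒜 (cimp (CForm.box x A) (CForm.dia x A))
  | axPath (x : α.Char) (s : List α.Char) (A : CForm α.Char) (h : Ax.ipa x s ∈ 𝒜) :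
      Kprf α 𝒜 (cimp (cdias s A) (CForm.dia x A))
  | mp (A B : CForm α.Char) : Kprf α 𝒜 (cimp A B) → Kprf α 𝒜 A → Kprf α 𝒜 B
  | nec (x : α.Char) (A : CForm α.Char) : Kprf α 𝒜 A → Kprf α 𝒜 (CForm.box x A)

/-- The double-negation translation from `L^C_Σ` into `L_Σ`. -/
def dntC {C : Type} : CForm C → Formula C
  | CForm.pos p => ((Formula.atom p).neg).neg
  | CForm.neg p => (((Formula.atom p).neg).neg).neg
  | CForm.or A B => (((dntC A).neg).and ((dntC B).neg)).neg
  | CForm.and A B => (dntC A).and (dntC B)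
  | CForm.dia x A => (Formula.box x ((dntC A).neg)).neg
  | CForm.box x A => Formula.box x (dntC A)

/-! ### Labeled tree sequents and derivation trees -/

/-- Reachability along the relational atoms of `R`. -/
def Reach {C : Type} (R : Multiset (Rel C)) (a b : ℕ) : Prop :=
  Relation.ReflTransGen (fun p q => ∃ x, (p, x, q) ∈ R) a b

/-- `R, Γ ⊢ w : ⋯` is a labeled tree sequent with root `r`. -/
def isTreeSeqRoot (α : Alphabet) (R : Multiset (Rel α.Char))
    (Γ : Multiset (LF α.Char)) (w r : ℕ) : Prop :=
  (R = 0 → r = w ∧ ∀ b ∈ Γ, b.1 = w) ∧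
  (R ≠ 0 →
    (∀ a ∈ R, a.2.2 ≠ r) ∧
    (∀ l : ℕ, l ≠ r → (R.filter (fun a => a.2.2 = l)).card ≤ 1) ∧
    (∀ l ∈ relLabels R, Reach R r l) ∧
    (∀ b ∈ Γ, b.1 ∈ relLabels R) ∧ w ∈ relLabels R)

/-- Proof trees (derivations) in the refined labeled calculus `L*_Σ(𝒜)`. -/
inductive DTree (α : Alphabet) (𝒜 : Set (Ax α.Char)) :
    Multiset (Rel α.Char) → Multiset (LF α.Char) → ℕ → Formula α.Char → Type
  | id (R : Multiset (Rel α.Char)) (Γ : Multiset (LF α.Char)) (w p : ℕ) :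
      DTree α 𝒜 R ((w, Formula.atom p) ::ₘ Γ) w (Formula.atom p)
  | botL (R : Multiset (Rel α.Char)) (Γ : Multiset (LF α.Char)) (w u : ℕ)
      (A : Formula α.Char) : DTree α 𝒜 R ((w, Formula.bot) ::ₘ Γ) u A
  | orL (R : Multiset (Rel α.Char)) (Γ : Multiset (LF α.Char)) (w u : ℕ)
      (A B C : Formula α.Char) :
      DTree α 𝒜 R ((w, A) ::ₘ Γ) u C → DTree α 𝒜 R ((w, B) ::ₘ Γ) u C →
      DTree α 𝒜 R ((w, A.or B) ::ₘ Γ) u C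
  | orR1 (R : Multiset (Rel α.Char)) (Γ : Multiset (LF α.Char)) (w : ℕ)
      (A B : Formula α.Char) : DTree α 𝒜 R Γ w A → DTree α 𝒜 R Γ w (A.or B)
  | orR2 (R : Multiset (Rel α.Char)) (Γ : Multiset (LF α.Char)) (w : ℕ)
      (A B : Formula α.Char) : DTree α 𝒜 R Γ w B → DTree α 𝒜 R Γ w (A.or B)
  | andL (R : Multiset (Rel α.Char)) (Γ : Multiset (LF α.Char)) (w u : ℕ)
      (A B C : Formula α.Char) :
      DTree α 𝒜 R ((w, A) ::ₘ (w, B) ::ₘ Γ) u C →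
      DTree α 𝒜 R ((w, A.and B) ::ₘ Γ) u C
  | andR (R : Multiset (Rel α.Char)) (Γ : Multiset (LF α.Char)) (w : ℕ)
      (A B : Formula α.Char) :
      DTree α 𝒜 R Γ w A → DTree α 𝒜 R Γ w B → DTree α 𝒜 R Γ w (A.and B)
  | impL (R : Multiset (Rel α.Char)) (Γ : Multiset (LF α.Char)) (w u : ℕ)
      (A B C : Formula α.Char) :
      DTree α 𝒜 R ((w, A.imp B) ::ₘ Γ) w A → DTree α 𝒜 R ((w, B) ::ₘ Γ) u C →
      DTree α 𝒜 R ((w, A.imp B) ::ₘ Γ) u C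
  | impR (R : Multiset (Rel α.Char)) (Γ : Multiset (LF α.Char)) (w : ℕ)
      (A B : Formula α.Char) :
      DTree α 𝒜 R ((w, A) ::ₘ Γ) w B → DTree α 𝒜 R Γ w (A.imp B)
  | diaL (R : Multiset (Rel α.Char)) (Γ : Multiset (LF α.Char)) (w u v : ℕ)
      (x : α.Char) (A B : Formula α.Char)
      (hf : freshIn u R ((w, Formula.dia x A) ::ₘ Γ) v) :
      DTree α 𝒜 ((w, x, u) ::ₘ R) ((u, A) ::ₘ Γ) v B →
      DTree α 𝒜 R ((w, Formula.dia x A) ::ₘ Γ) v B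
  | boxR (R : Multiset (Rel α.Char)) (Γ : Multiset (LF α.Char)) (w u : ℕ)
      (x : α.Char) (A : Formula α.Char) (hf : freshIn u R Γ w) :
      DTree α 𝒜 ((w, x, u) ::ₘ R) Γ u A → DTree α 𝒜 R Γ w (Formula.box x A)
  | dx (R : Multiset (Rel α.Char)) (Γ : Multiset (LF α.Char)) (w u v : ℕ)
      (x : α.Char) (A : Formula α.Char) (hax : Ax.ser x ∈ 𝒜)
      (hf : freshIn u R Γ v) :
      DTree α 𝒜 ((w, x, u) ::ₘ R) Γ v A → DTree α 𝒜 R Γ v A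
  | pdia (R : Multiset (Rel α.Char)) (Γ : Multiset (LF α.Char)) (w u : ℕ)
      (x : α.Char) (A : Formula α.Char) (h : CanProp α 𝒜 R w u x) :
      DTree α 𝒜 R Γ u A → DTree α 𝒜 R Γ w (Formula.dia x A)
  | pbox (R : Multiset (Rel α.Char)) (Γ : Multiset (LF α.Char)) (w u v : ℕ)
      (x : α.Char) (A B : Formula α.Char) (h : CanProp α 𝒜 R w u x) :
      DTree α 𝒜 R ((w, Formula.box x A) ::ₘ (u, A) ::ₘ Γ) v B →
      DTree α 𝒜 R ((w, Formula.box x A) ::ₘ Γ) v B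

/-- `EverySeq P d`: every labeled sequent occurring in the derivation `d`
satisfies `P`. -/
def EverySeq {α : Alphabet} {𝒜 : Set (Ax α.Char)}
    (P : Multiset (Rel α.Char) → Multiset (LF α.Char) → ℕ → Formula α.Char → Prop) :
    ∀ {R : Multiset (Rel α.Char)} {Γ : Multiset (LF α.Char)} {w : ℕ}
      {A : Formula α.Char}, DTree α 𝒜 R Γ w A → Prop
  | _, _, _, _, DTree.id R Γ w p => P R ((w, Formula.atom p) ::ₘ Γ) w (Formula.atom p)
  | _, _, _, _, DTree.botL R Γ w u A => P R ((w, Formula.bot) ::ₘ Γ) u A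
  | _, _, _, _, DTree.orL R Γ w u A B C d1 d2 =>
      P R ((w, A.or B) ::ₘ Γ) u C ∧ EverySeq P d1 ∧ EverySeq P d2
  | _, _, _, _, DTree.orR1 R Γ w A B d => P R Γ w (A.or B) ∧ EverySeq P d
  | _, _, _, _, DTree.orR2 R Γ w A B d => P R Γ w (A.or B) ∧ EverySeq P d
  | _, _, _, _, DTree.andL R Γ w u A B C d =>
      P R ((w, A.and B) ::ₘ Γ) u C ∧ EverySeq P d
  | _, _, _, _, DTree.andR R Γ w A B d1 d2 =>
      P R Γ w (A.and B) ∧ EverySeq P d1 ∧ EverySeq P d2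
  | _, _, _, _, DTree.impL R Γ w u A B C d1 d2 =>
      P R ((w, A.imp B) ::ₘ Γ) u C ∧ EverySeq P d1 ∧ EverySeq P d2
  | _, _, _, _, DTree.impR R Γ w A B d => P R Γ w (A.imp B) ∧ EverySeq P d
  | _, _, _, _, DTree.diaL R Γ w u v x A B _ d =>
      P R ((w, Formula.dia x A) ::ₘ Γ) v B ∧ EverySeq P d
  | _, _, _, _, DTree.boxR R Γ w u x A _ d =>
      P R Γ w (Formula.box x A) ∧ EverySeq P d
  | _, _, _, _, DTree.dx R Γ w u v x A _ _ d => P R Γ v A ∧ EverySeq P d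
  | _, _, _, _, DTree.pdia R Γ w u x A _ d =>
      P R Γ w (Formula.dia x A) ∧ EverySeq P d
  | _, _, _, _, DTree.pbox R Γ w u v x A B _ d =>
      P R ((w, Formula.box x A) ::ₘ Γ) v B ∧ EverySeq P d

/-! ### Auxiliary lemmas for admissibility -/

section SubLemmas
variable {C : Type}

lemma subL_self (v u : ℕ) : subL v u v = u := if_pos rfl

lemma subL_eq_of_ne {v l : ℕ} (u : ℕ) (h : l ≠ v) : subL v u l = l := if_neg h

lemma subL_cases (v u l : ℕ) : subL v u l = u ∨ subL v u l = l := by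
  unfold subL; split <;> simp

lemma subR_cons' (v u a : ℕ) (x : C) (b : ℕ) (R : Multiset (Rel C)) :
    subR v u (((a, x, b) : Rel C) ::ₘ R)
      = (subL v u a, x, subL v u b) ::ₘ subR v u R := by
  simp [subR]

lemma subG_cons' (v u a : ℕ) (A : Formula C) (Γ : Multiset (LF C)) :
    subG v u (((a, A) : LF C) ::ₘ Γ) = (subL v u a, A) ::ₘ subG v u Γ := by
  simp [subG]

lemma subR_add (v u : ℕ) (m R : Multiset (Rel C)) :
    subR v u (m + R) = subR v u m + subR v u R := by
  simp [subR]

lemma subR_id {v : ℕ} (u : ℕ) {R : Multiset (Rel C)} (h : v ∉ relLabels R) :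
    subR v u R = R := by
  have hc : ∀ a ∈ R, (fun a : Rel C => (subL v u a.1, a.2.1, subL v u a.2.2)) a = id a := by
    intro a ha
    have h1 : a.1 ≠ v := fun e => h ⟨a, ha, Or.inl e⟩
    have h2 : a.2.2 ≠ v := fun e => h ⟨a, ha, Or.inr e⟩
    simp [subL, h1, h2]
  rw [subR, Multiset.map_congr rfl hc, Multiset.map_id]

lemma subG_id {v : ℕ} (u : ℕ) {Γ : Multiset (LF C)} (h : v ∉ lfLabels Γ) :
    subG v u Γ = Γ := by
  have hc : ∀ b ∈ Γ, (fun b : LF C => (subL v u b.1, b.2)) b = id b := by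
    intro b hb
    have h1 : b.1 ≠ v := fun e => h ⟨b, hb, e⟩
    simp [subL, h1]
  rw [subG, Multiset.map_congr rfl hc, Multiset.map_id]

lemma mem_relLabels_cons {a : Rel C} {R : Multiset (Rel C)} {l : ℕ} :
    l ∈ relLabels (a ::ₘ R) ↔ (a.1 = l ∨ a.2.2 = l) ∨ l ∈ relLabels R := by
  simp [relLabels, or_and_right, exists_or]

lemma mem_lfLabels_cons {b : LF C} {Γ : Multiset (LF C)} {l : ℕ} :
    l ∈ lfLabels (b ::ₘ Γ) ↔ b.1 = l ∨ l ∈ lfLabels Γ := by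
  simp [lfLabels]

lemma mem_relLabels_add {R R' : Multiset (Rel C)} {l : ℕ} :
    l ∈ relLabels (R' + R) ↔ l ∈ relLabels R' ∨ l ∈ relLabels R := by
  constructor
  · rintro ⟨a, ha, hl⟩
    rcases Multiset.mem_add.1 ha with h | h
    · exact Or.inl ⟨a, h, hl⟩
    · exact Or.inr ⟨a, h, hl⟩
  · rintro (⟨a, ha, hl⟩ | ⟨a, ha, hl⟩)
    · exact ⟨a, Multiset.mem_add.2 (Or.inl ha), hl⟩
    · exact ⟨a, Multiset.mem_add.2 (Or.inr ha), hl⟩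

lemma mem_lfLabels_add {Γ Γ' : Multiset (LF C)} {l : ℕ} :
    l ∈ lfLabels (Γ + Γ') ↔ l ∈ lfLabels Γ ∨ l ∈ lfLabels Γ' := by
  constructor
  · rintro ⟨b, hb, hl⟩
    rcases Multiset.mem_add.1 hb with h | h
    · exact Or.inl ⟨b, h, hl⟩
    · exact Or.inr ⟨b, h, hl⟩
  · rintro (⟨b, hb, hl⟩ | ⟨b, hb, hl⟩)
    · exact ⟨b, Multiset.mem_add.2 (Or.inl hb), hl⟩
    · exact ⟨b, Multiset.mem_add.2 (Or.inr hb), hl⟩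

lemma mem_relLabels_subR {l u v : ℕ} {R : Multiset (Rel C)}
    (h : l ∈ relLabels (subR v u R)) : l = u ∨ l ∈ relLabels R := by
  obtain ⟨a, ha, hl⟩ := h
  obtain ⟨b, hb, rfl⟩ := Multiset.mem_map.1 ha
  rcases hl with h | h
  · by_cases hc : b.1 = v
    · left; simpa [subL, hc] using h.symm
    · right; exact ⟨b, hb, Or.inl (by simpa [subL, hc] using h)⟩
  · by_cases hc : b.2.2 = v
    · left; simpa [subL, hc] using h.symm
    · right; exact ⟨b, hb, Or.inr (by simpa [subL, hc] using h)⟩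

lemma mem_lfLabels_subG {l u v : ℕ} {Γ : Multiset (LF C)}
    (h : l ∈ lfLabels (subG v u Γ)) : l = u ∨ l ∈ lfLabels Γ := by
  obtain ⟨b, hb, hl⟩ := h
  obtain ⟨c, hc, rfl⟩ := Multiset.mem_map.1 hb
  by_cases hd : c.1 = v
  · left; simpa [subL, hd] using hl.symm
  · right; exact ⟨c, hc, by simpa [subL, hd] using hl⟩

/-- A bound on the labels occurring in a multiset of relational atoms. -/
def rBound (R : Multiset (Rel C)) : ℕ := (R.map (fun a => a.1 + a.2.2)).sum

/-- A bound on the labels occurring in a multiset of labeled formulae. -/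
def gBound (Γ : Multiset (LF C)) : ℕ := (Γ.map Prod.fst).sum

lemma le_rBound {R : Multiset (Rel C)} {l : ℕ} (h : l ∈ relLabels R) :
    l ≤ rBound R := by
  obtain ⟨a, ha, hl⟩ := h
  have := Multiset.single_le_sum (s := R.map (fun a => a.1 + a.2.2))
    (fun x _ => Nat.zero_le x) _ (Multiset.mem_map_of_mem _ ha)
  simp only [rBound]
  rcases hl with h | h <;> omega

lemma le_gBound {Γ : Multiset (LF C)} {l : ℕ} (h : l ∈ lfLabels Γ) :
    l ≤ gBound Γ := by
  obtain ⟨b, hb, hl⟩ := h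
  have := Multiset.single_le_sum (s := Γ.map Prod.fst)
    (fun x _ => Nat.zero_le x) _ (Multiset.mem_map_of_mem _ hb)
  simp only [gBound]
  omega

lemma chain_sub {s : List C} {w u' : ℕ} {m : Multiset (Rel C)}
    (v u : ℕ) (h : Chain s w u' m) :
    Chain s (subL v u w) (subL v u u') (subR v u m) := by
  induction h with
  | nil w => simpa [subR] using Chain.nil (C := C) (subL v u w)
  | @cons x s w' v' u'' m _ ih =>
      rw [subR_cons']
      exact Chain.cons ih

end SubLemmas
/-- hp-admissibility of label substitution in `L_Σ(𝒜)`. -/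
lemma sub_adm (α : Alphabet) (𝒜 : Set (Ax α.Char)) :
    ∀ (n : ℕ) (R : Multiset (Rel α.Char)) (Γ : Multiset (LF α.Char)) (w : ℕ)
      (A : Formula α.Char) (u v : ℕ),
      LD α 𝒜 n R Γ w A → LD α 𝒜 n (subR v u R) (subG v u Γ) (subL v u w) A := by
  intro n
  induction n using Nat.strong_induction_on with
  | _ n ih =>
  intro R Γ w A u v hd
  have ihn : ∀ {m : ℕ}, m < n → ∀ (R : Multiset (Rel α.Char))
      (Γ : Multiset (LF α.Char)) (w : ℕ) (A : Formula α.Char) (u v : ℕ),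
      LD α 𝒜 m R Γ w A → LD α 𝒜 m (subR v u R) (subG v u Γ) (subL v u w) A :=
    fun hm => ih _ hm
  cases hd with
  | id =>
      rename_i Γ₀ p
      rw [subG_cons']
      exact LD.id _ _ _ _ _
  | botL =>
      rename_i Γ₀ w₁
      rw [subG_cons']
      exact LD.botL _ _ _ _ _ _
  | orL h1 h2 =>
      rename_i m Γ₀ w₁ A₁ B₁
      rw [subG_cons']
      exact LD.orL
        (by simpa [subG_cons'] using ihn (Nat.lt_succ_self _) _ _ _ _ u v h1)
        (by simpa [subG_cons'] using ihn (Nat.lt_succ_self _) _ _ _ _ u v h2)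
  | orR1 h1 =>
      exact LD.orR1 (ihn (Nat.lt_succ_self _) _ _ _ _ u v h1)
  | orR2 h1 =>
      exact LD.orR2 (ihn (Nat.lt_succ_self _) _ _ _ _ u v h1)
  | andL h1 =>
      rename_i m Γ₀ w₁ A₁ B₁
      rw [subG_cons']
      exact LD.andL
        (by simpa [subG_cons'] using ihn (Nat.lt_succ_self _) _ _ _ _ u v h1)
  | andR h1 h2 =>
      exact LD.andR (ihn (Nat.lt_succ_self _) _ _ _ _ u v h1)
        (ihn (Nat.lt_succ_self _) _ _ _ _ u v h2)
  | impL h1 h2 =>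
      rename_i m Γ₀ w₁ A₁ B₁
      rw [subG_cons']
      exact LD.impL
        (by simpa [subG_cons'] using ihn (Nat.lt_succ_self _) _ _ _ _ u v h1)
        (by simpa [subG_cons'] using ihn (Nat.lt_succ_self _) _ _ _ _ u v h2)
  | impR h1 =>
      exact LD.impR
        (by simpa [subG_cons'] using ihn (Nat.lt_succ_self _) _ _ _ _ u v h1)
  | diaL hf h1 =>
      rename_i m Γ₀ w₁ u₀ x A₁
      -- rename the fresh label u₀ to a globally fresh z, then substitute
      obtain ⟨hfR, hfΓ, hfv⟩ := hf
      rw [mem_lfLabels_cons] at hfΓ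
      push_neg at hfΓ
      obtain ⟨hfw, hfΓ⟩ := hfΓ
      set z := rBound R + gBound Γ₀ + w₁ + w + u + v + u₀ + 1 with hz
      have h2 : LD α 𝒜 m ((w₁, x, z) ::ₘ R) ((z, A₁) ::ₘ Γ₀) w A := by
        have := ihn (Nat.lt_succ_self _) _ _ _ _ z u₀ h1
        simpa [subR_cons', subG_cons', subL_self, subR_id z hfR,
          subG_id z hfΓ, subL_eq_of_ne z hfw,
          subL_eq_of_ne z (Ne.symm hfv)] using this
      have h3 := ihn (Nat.lt_succ_self _) _ _ _ _ u v h2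
      rw [subR_cons', subG_cons'] at h3
      have hzv : subL v u z = z := subL_eq_of_ne u (by omega)
      rw [hzv] at h3
      rw [subG_cons']
      refine LD.diaL ?_ h3
      refine ⟨?_, ?_, ?_⟩
      · intro hmem
        rcases mem_relLabels_subR hmem with h | h
        · omega
        · have := le_rBound h; omega
      · intro hmem
        rw [mem_lfLabels_cons] at hmem
        rcases hmem with h | h
        · rcases subL_cases v u w₁ with h' | h' <;> simp only [h'] at h <;> omega
        · rcases mem_lfLabels_subG h with h' | h'
          · omega
          · have := le_gBound h'; omega
      · rcases subL_cases v u w with h | h <;> omega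
  | diaR h1 =>
      rename_i m R₀ u₀ x A₁
      have h2 := ihn (Nat.lt_succ_self _) _ _ _ _ u v h1
      rw [subR_cons'] at h2 ⊢
      exact LD.diaR h2
  | boxR hf h1 =>
      rename_i m u₀ x A₁
      obtain ⟨hfR, hfΓ, hfw⟩ := hf
      set z := rBound R + gBound Γ + w + u + v + u₀ + 1 with hz
      have h2 : LD α 𝒜 m ((w, x, z) ::ₘ R) Γ z A₁ := by
        have := ihn (Nat.lt_succ_self _) _ _ _ _ z u₀ h1
        simpa [subR_cons', subL_self, subR_id z hfR, subG_id z hfΓ,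
          subL_eq_of_ne z (Ne.symm hfw)] using this
      have h3 := ihn (Nat.lt_succ_self _) _ _ _ _ u v h2
      rw [subR_cons'] at h3
      have hzv : subL v u z = z := subL_eq_of_ne u (by omega)
      rw [hzv] at h3
      refine LD.boxR ?_ h3
      refine ⟨?_, ?_, ?_⟩
      · intro hmem
        rcases mem_relLabels_subR hmem with h | h
        · omega
        · have := le_rBound h; omega
      · intro hmem
        rcases mem_lfLabels_subG hmem with h | h
        · omega
        · have := le_gBound h; omega
      · rcases subL_cases v u w with h | h <;> omega
  | boxL h1 =>
      rename_i m R₀ Γ₀ w₁ u₀ x A₁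
      have h2 := ihn (Nat.lt_succ_self _) _ _ _ _ u v h1
      rw [subR_cons', subG_cons', subG_cons'] at h2
      rw [subR_cons', subG_cons']
      exact LD.boxL h2
  | dx w₁ hax hf h1 =>
      rename_i m u₀ x
      obtain ⟨hfR, hfΓ, hfv⟩ := hf
      set z := rBound R + gBound Γ + w₁ + w + u + v + u₀ + 1 with hz
      have h2 : LD α 𝒜 m ((subL u₀ z w₁, x, z) ::ₘ R) Γ w A := by
        have := ihn (Nat.lt_succ_self _) _ _ _ _ z u₀ h1
        simpa [subR_cons', subL_self, subR_id z hfR, subG_id z hfΓ,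
          subL_eq_of_ne z (Ne.symm hfv)] using this
      have h3 := ihn (Nat.lt_succ_self _) _ _ _ _ u v h2
      rw [subR_cons'] at h3
      have hzv : subL v u z = z := subL_eq_of_ne u (by omega)
      rw [hzv] at h3
      refine LD.dx _ hax ?_ h3
      refine ⟨?_, ?_, ?_⟩
      · intro hmem
        rcases mem_relLabels_subR hmem with h | h
        · omega
        · have := le_rBound h; omega
      · intro hmem
        rcases mem_lfLabels_subG hmem with h | h
        · omega
        · have := le_gBound h; omega
      · rcases subL_cases v u w with h | h <;> omega
  | isx hax hc h1 =>
      rename_i m R₀ w₁ u₀ s x mm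
      have h2 := ihn (Nat.lt_succ_self _) _ _ _ _ u v h1
      rw [subR_cons', subR_add] at h2
      rw [subR_add]
      exact LD.isx hax (chain_sub v u hc) h2
  | cx h1 =>
      rename_i m R₀ w₁ u₀ x
      have h2 := ihn (Nat.lt_succ_self _) _ _ _ _ u v h1
      rw [subR_cons', subR_cons'] at h2
      rw [subR_cons']
      exact LD.cx h2
/-- hp-admissibility of weakening in `L_Σ(𝒜)`. -/
lemma weak_adm (α : Alphabet) (𝒜 : Set (Ax α.Char)) :
    ∀ (n : ℕ) (R : Multiset (Rel α.Char)) (Γ : Multiset (LF α.Char)) (w : ℕ)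
      (A : Formula α.Char) (R' : Multiset (Rel α.Char)) (Γ' : Multiset (LF α.Char)),
      LD α 𝒜 n R Γ w A → LD α 𝒜 n (R' + R) (Γ + Γ') w A := by
  intro n
  induction n using Nat.strong_induction_on with
  | _ n ih =>
  intro R Γ w A R' Γ' hd
  have ihn : ∀ {m : ℕ}, m < n → ∀ (R : Multiset (Rel α.Char))
      (Γ : Multiset (LF α.Char)) (w : ℕ) (A : Formula α.Char)
      (R' : Multiset (Rel α.Char)) (Γ' : Multiset (LF α.Char)),
      LD α 𝒜 m R Γ w A → LD α 𝒜 m (R' + R) (Γ + Γ') w A :=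
    fun hm => ih _ hm
  cases hd with
  | id =>
      rw [Multiset.cons_add]
      exact LD.id _ _ _ _ _
  | botL =>
      rw [Multiset.cons_add]
      exact LD.botL _ _ _ _ _ _
  | orL h1 h2 =>
      rw [Multiset.cons_add]
      exact LD.orL
        (by simpa [Multiset.cons_add] using ihn (Nat.lt_succ_self _) _ _ _ _ R' Γ' h1)
        (by simpa [Multiset.cons_add] using ihn (Nat.lt_succ_self _) _ _ _ _ R' Γ' h2)
  | orR1 h1 =>
      exact LD.orR1 (ihn (Nat.lt_succ_self _) _ _ _ _ R' Γ' h1)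
  | orR2 h1 =>
      exact LD.orR2 (ihn (Nat.lt_succ_self _) _ _ _ _ R' Γ' h1)
  | andL h1 =>
      rw [Multiset.cons_add]
      exact LD.andL
        (by simpa [Multiset.cons_add] using ihn (Nat.lt_succ_self _) _ _ _ _ R' Γ' h1)
  | andR h1 h2 =>
      exact LD.andR (ihn (Nat.lt_succ_self _) _ _ _ _ R' Γ' h1)
        (ihn (Nat.lt_succ_self _) _ _ _ _ R' Γ' h2)
  | impL h1 h2 =>
      rw [Multiset.cons_add]
      exact LD.impL
        (by simpa [Multiset.cons_add] using ihn (Nat.lt_succ_self _) _ _ _ _ R' Γ' h1)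
        (by simpa [Multiset.cons_add] using ihn (Nat.lt_succ_self _) _ _ _ _ R' Γ' h2)
  | impR h1 =>
      exact LD.impR
        (by simpa [Multiset.cons_add] using ihn (Nat.lt_succ_self _) _ _ _ _ R' Γ' h1)
  | diaL hf h1 =>
      rename_i m Γ₀ w₁ u₀ x A₁
      obtain ⟨hfR, hfΓ, hfv⟩ := hf
      rw [mem_lfLabels_cons] at hfΓ
      push_neg at hfΓ
      obtain ⟨hfw, hfΓ⟩ := hfΓ
      set z := rBound R' + rBound R + gBound Γ₀ + gBound Γ' + w₁ + w + u₀ + 1 with hz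
      have h2 : LD α 𝒜 m ((w₁, x, z) ::ₘ R) ((z, A₁) ::ₘ Γ₀) w A := by
        have := sub_adm α 𝒜 m _ _ _ _ z u₀ h1
        simpa [subR_cons', subG_cons', subL_self, subR_id z hfR,
          subG_id z hfΓ, subL_eq_of_ne z hfw,
          subL_eq_of_ne z (Ne.symm hfv)] using this
      have h3 := ihn (Nat.lt_succ_self _) _ _ _ _ R' Γ' h2
      rw [Multiset.add_cons, Multiset.cons_add] at h3
      rw [Multiset.cons_add]
      refine LD.diaL ?_ h3
      refine ⟨?_, ?_, ?_⟩
      · intro hmem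
        rcases mem_relLabels_add.1 hmem with h | h <;>
          · have := le_rBound h; omega
      · intro hmem
        rw [mem_lfLabels_cons] at hmem
        rcases hmem with h | h
        · simp only at h; omega
        · rcases mem_lfLabels_add.1 h with h' | h' <;>
            · have := le_gBound h'; omega
      · omega
  | diaR h1 =>
      rename_i m R₀ u₀ x A₁
      have h3 := ihn (Nat.lt_succ_self _) _ _ _ _ R' Γ' h1
      rw [Multiset.add_cons] at h3 ⊢
      exact LD.diaR h3
  | boxR hf h1 =>
      rename_i m u₀ x A₁
      obtain ⟨hfR, hfΓ, hfw⟩ := hf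
      set z := rBound R' + rBound R + gBound Γ + gBound Γ' + w + u₀ + 1 with hz
      have h2 : LD α 𝒜 m ((w, x, z) ::ₘ R) Γ z A₁ := by
        have := sub_adm α 𝒜 m _ _ _ _ z u₀ h1
        simpa [subR_cons', subL_self, subR_id z hfR, subG_id z hfΓ,
          subL_eq_of_ne z (Ne.symm hfw)] using this
      have h3 := ihn (Nat.lt_succ_self _) _ _ _ _ R' Γ' h2
      rw [Multiset.add_cons] at h3
      refine LD.boxR ?_ h3
      refine ⟨?_, ?_, ?_⟩
      · intro hmem
        rcases mem_relLabels_add.1 hmem with h | h <;>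
          · have := le_rBound h; omega
      · intro hmem
        rcases mem_lfLabels_add.1 hmem with h | h <;>
          · have := le_gBound h; omega
      · omega
  | boxL h1 =>
      rename_i m R₀ Γ₀ w₁ u₀ x A₁
      have h3 := ihn (Nat.lt_succ_self _) _ _ _ _ R' Γ' h1
      rw [Multiset.add_cons, Multiset.cons_add, Multiset.cons_add] at h3
      rw [Multiset.add_cons, Multiset.cons_add]
      exact LD.boxL h3
  | dx w₁ hax hf h1 =>
      rename_i m u₀ x
      obtain ⟨hfR, hfΓ, hfv⟩ := hf
      set z := rBound R' + rBound R + gBound Γ + gBound Γ' + w₁ + w + u₀ + 1 with hz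
      have h2 : LD α 𝒜 m ((subL u₀ z w₁, x, z) ::ₘ R) Γ w A := by
        have := sub_adm α 𝒜 m _ _ _ _ z u₀ h1
        simpa [subR_cons', subL_self, subR_id z hfR, subG_id z hfΓ,
          subL_eq_of_ne z (Ne.symm hfv)] using this
      have h3 := ihn (Nat.lt_succ_self _) _ _ _ _ R' Γ' h2
      rw [Multiset.add_cons] at h3
      refine LD.dx _ hax ?_ h3
      refine ⟨?_, ?_, ?_⟩
      · intro hmem
        rcases mem_relLabels_add.1 hmem with h | h <;>
          · have := le_rBound h; omega
      · intro hmem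
        rcases mem_lfLabels_add.1 hmem with h | h <;>
          · have := le_gBound h; omega
      · omega
  | isx hax hc h1 =>
      rename_i m R₀ w₁ u₀ s x mm
      have h3 := ihn (Nat.lt_succ_self _) _ _ _ _ R' Γ' h1
      rw [Multiset.add_cons, add_left_comm] at h3
      rw [add_left_comm]
      exact LD.isx hax hc h3
  | cx h1 =>
      rename_i m R₀ w₁ u₀ x
      have h3 := ihn (Nat.lt_succ_self _) _ _ _ _ R' Γ' h1
      rw [Multiset.add_cons, Multiset.add_cons] at h3
      rw [Multiset.add_cons]
      exact LD.cx h3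
/-- **hp-admissibility of label substitution `(s)` and weakening `(w_l)`**
in `L_Σ(𝒜)`. -/
theorem substitution_and_weakening_hp_admissible (α : Alphabet)
    (𝒜 : Set (Ax α.Char)) :
    (∀ (h : ℕ) (R : Multiset (Rel α.Char)) (Γ : Multiset (LF α.Char)) (w : ℕ)
        (A : Formula α.Char) (u v : ℕ),
      LD α 𝒜 h R Γ w A → LD α 𝒜 h (subR v u R) (subG v u Γ) (subL v u w) A) ∧
    (∀ (h : ℕ) (R : Multiset (Rel α.Char)) (Γ : Multiset (LF α.Char)) (w : ℕ)
        (A : Formula α.Char) (R' : Multiset (Rel α.Char))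
        (Γ' : Multiset (LF α.Char)),
      LD α 𝒜 h R Γ w A → LD α 𝒜 h (R' + R) (Γ + Γ') w A) :=
  ⟨fun h R Γ w A u v hd => sub_adm α 𝒜 h R Γ w A u v hd,
   fun h R Γ w A R' Γ' hd => weak_adm α 𝒜 h R Γ w A R' Γ' hd⟩

end IGL
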